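/- The eigenvalue of largest absolute value of the discrete D-dimensional periodic Laplacian has modulus 4D/h²: the operator norm of the linear map on EuclideanSpace ℂ (Fin D → Fin N) induced by the matrix L_D (i.e., ‖Matrix.toEuclideanLin L_D‖) equals 4D/h² = 4D·N². Consequently the scaled matrix L̃_D = (h²/(4D))·L_D has operator norm 1. -/

import Mathlib

open Matrix

noncomputable section

/-- Cyclic shift matrix `S₊`: `(S₊)_{jk} = 1` iff `j ≡ k+1 (mod N)`. -/
def Sp (N : ℕ) [NeZero N] : Matrix (Fin N) (Fin N) ℂ :=
  Matrix.of fun j k => if j = k + 1 then 1 else 0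

/-- Cyclic shift matrix `S₋ = S₊ᵀ`. -/
def Sm (N : ℕ) [NeZero N] : Matrix (Fin N) (Fin N) ℂ := (Sp N)ᵀ

/-- The discrete 1D periodic Laplacian `L₁ = (1/h²)(S₊ + S₋ − 2·I_N)`. -/
def L1 (N : ℕ) [NeZero N] (h : ℝ) : Matrix (Fin N) (Fin N) ℂ :=
  ((1 / h ^ 2 : ℝ) : ℂ) • (Sp N + Sm N - 2 • (1 : Matrix (Fin N) (Fin N) ℂ))

/-- The discrete `D`-dimensional periodic Laplacian, the Kronecker sum of `D` copies of `L₁`. -/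
def LD (N D : ℕ) [NeZero N] (h : ℝ) :
    Matrix (Fin D → Fin N) (Fin D → Fin N) ℂ :=
  Matrix.of fun j k => ∑ d : Fin D,
    L1 N h (j d) (k d) * ∏ e ∈ Finset.univ.erase d, (if j e = k e then (1 : ℂ) else 0)

/-- The normalized discrete `D`-dimensional periodic Laplacian `L̃_D = (h²/(4D))·L_D`. -/
def LtD (N D : ℕ) [NeZero N] (h : ℝ) :
    Matrix (Fin D → Fin N) (Fin D → Fin N) ℂ :=
  ((h ^ 2 / (4 * D) : ℝ) : ℂ) • LD N D h

-- aux
lemma L1_row (N : ℕ) [NeZero N] (h : ℝ) (a : Fin N) (w : Fin N → ℂ) :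
    ∑ m, L1 N h a m * w m
      = ((1 / h ^ 2 : ℝ) : ℂ) * (w (a - 1) + w (a + 1) - 2 * w a) := by
  have key : ∀ m : Fin N, L1 N h a m * w m
      = ((1 / h ^ 2 : ℝ) : ℂ) * ((if m = a - 1 then w m else 0)
          + (if m = a + 1 then w m else 0) - 2 * (if m = a then w m else 0)) := by
    intro m
    have h1 : (a = m + 1) ↔ (m = a - 1) := by
      constructor <;> intro hh <;> subst hh <;> simp
    have h2 : (a = m) ↔ (m = a) := eq_comm
    simp only [L1, Sp, Sm, Matrix.smul_apply, Matrix.sub_apply, Matrix.add_apply,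
      Matrix.of_apply, Matrix.transpose_apply, Matrix.smul_apply, Matrix.one_apply,
      smul_eq_mul, h1, h2]
    split_ifs <;> ring
  rw [Finset.sum_congr rfl fun m _ => key m, ← Finset.mul_sum]
  congr 1
  rw [Finset.sum_sub_distrib, Finset.sum_add_distrib, ← Finset.mul_sum]
  simp [Finset.sum_ite_eq']

lemma sum_update {N D : ℕ} [NeZero N] (d : Fin D) (j : Fin D → Fin N)
    (F : Fin N → ℂ) (v : (Fin D → Fin N) → ℂ) :
    ∑ k : Fin D → Fin N,
        F (k d) * (∏ e ∈ Finset.univ.erase d, if j e = k e then (1 : ℂ) else 0) * v k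
      = ∑ m : Fin N, F m * v (Function.update j d m) := by
  classical
  set σ := Equiv.funSplitAt d (Fin N) with hσ
  rw [← Equiv.sum_comp σ.symm
    (fun k => F (k d) * (∏ e ∈ Finset.univ.erase d, if j e = k e then (1:ℂ) else 0) * v k),
    Fintype.sum_prod_type]
  refine Finset.sum_congr rfl fun m _ => ?_
  have hd : ∀ q : {e : Fin D // e ≠ d} → Fin N, σ.symm (m, q) d = m := by
    intro q; simp [hσ, Equiv.funSplitAt]
  have hne : ∀ (q : {e : Fin D // e ≠ d} → Fin N) (e : Fin D) (he : e ≠ d),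
      σ.symm (m, q) e = q ⟨e, he⟩ := by
    intro q e he; simp [hσ, Equiv.funSplitAt, he]
  have hprod : ∀ q : {e : Fin D // e ≠ d} → Fin N,
      (∏ e ∈ Finset.univ.erase d, if j e = σ.symm (m, q) e then (1:ℂ) else 0)
        = if (fun x : {e : Fin D // e ≠ d} => j x.1) = q then 1 else 0 := by
    intro q
    rw [Finset.prod_subtype (p := fun e => e ≠ d) (Finset.univ.erase d)
      (fun x => by simp [Finset.mem_erase]) (fun e => if j e = σ.symm (m, q) e then (1:ℂ) else 0)]
    have : ∀ x : {e : Fin D // e ≠ d},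
        (if j x.1 = σ.symm (m, q) x.1 then (1:ℂ) else 0) = if j x.1 = q x then 1 else 0 := by
      intro x; rw [hne q x.1 x.2]
    rw [Finset.prod_congr rfl fun x _ => this x, Finset.prod_boole]
    congr 1
    simp only [eq_iff_iff]
    constructor
    · intro hq; funext x; exact hq x (Finset.mem_univ x)
    · intro hq x _; exact congrFun hq x
  rw [Fintype.sum_eq_single (fun x : {e : Fin D // e ≠ d} => j x.1)
    (fun q hq => by rw [hprod q, if_neg (Ne.symm hq)]; ring)]
  rw [hprod, if_pos rfl, hd]
  have : σ.symm (m, fun x : {e : Fin D // e ≠ d} => j x.1) = Function.update j d m := by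
    funext e
    rcases eq_or_ne e d with rfl | he
    · rw [hd]; simp
    · rw [hne _ e he, Function.update_of_ne he]
  rw [this]; ring

lemma mulVec_LD {N D : ℕ} [NeZero N] (h : ℝ) (v : (Fin D → Fin N) → ℂ)
    (j : Fin D → Fin N) :
    (LD N D h).mulVec v j = ∑ d : Fin D, ((1 / h ^ 2 : ℝ) : ℂ) *
      (v (Function.update j d (j d - 1)) + v (Function.update j d (j d + 1)) - 2 * v j) := by
  classical
  simp only [Matrix.mulVec, dotProduct, LD, Matrix.of_apply, Finset.sum_mul]
  rw [Finset.sum_comm]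
  refine Finset.sum_congr rfl fun d _ => ?_
  rw [sum_update d j (fun m => L1 N h (j d) m) v, L1_row]
  rw [Function.update_eq_self]

lemma neg_one_pow_mod (m N : ℕ) (hN : Even N) : ((-1 : ℂ)) ^ (m % N) = (-1) ^ m := by
  conv_rhs => rw [← Nat.div_add_mod m N]
  rw [pow_add, pow_mul, hN.neg_one_pow, one_pow, one_mul]

def sgn {N : ℕ} (a : Fin N) : ℂ := (-1) ^ (a : ℕ)

lemma sgn_add_one {N : ℕ} [NeZero N] (hN : Even N) (hN1 : 1 < N) (a : Fin N) :
    sgn (a + 1) = - sgn a := by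
  have h1 : ((1 : Fin N) : ℕ) = 1 := by
    rw [Fin.val_one']
    exact Nat.mod_eq_of_lt hN1
  unfold sgn
  rw [Fin.val_add, h1, neg_one_pow_mod _ _ hN, pow_succ]
  ring

lemma sgn_sub_one {N : ℕ} [NeZero N] (hN : Even N) (hN1 : 1 < N) (a : Fin N) :
    sgn (a - 1) = - sgn a := by
  have := sgn_add_one hN hN1 (a - 1)
  rw [sub_add_cancel] at this
  rw [this, neg_neg]

lemma sgn_ne_zero {N : ℕ} (a : Fin N) : sgn a ≠ 0 := by
  unfold sgn
  exact pow_ne_zero _ (by norm_num)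

lemma norm_sgn {N : ℕ} (a : Fin N) : ‖sgn a‖ = 1 := by
  unfold sgn
  rw [norm_pow, norm_neg, norm_one, one_pow]

def shiftEq {N D : ℕ} [NeZero N] (d : Fin D) (c : Fin N) :
    (Fin D → Fin N) ≃ (Fin D → Fin N) where
  toFun j := Function.update j d (j d + c)
  invFun j := Function.update j d (j d - c)
  left_inv j := by
    funext e
    rcases eq_or_ne e d with rfl | he
    · simp
    · simp [Function.update_of_ne he]
  right_inv j := by
    funext e
    rcases eq_or_ne e d with rfl | he
    · simp
    · simp [Function.update_of_ne he]

lemma shiftEq_apply {N D : ℕ} [NeZero N] (d : Fin D) (c : Fin N) (j : Fin D → Fin N) :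
    shiftEq d c j = Function.update j d (j d + c) := rfl

lemma shiftEq_symm_apply {N D : ℕ} [NeZero N] (d : Fin D) (c : Fin N) (j : Fin D → Fin N) :
    (shiftEq d c).symm j = Function.update j d (j d - c) := rfl

lemma norm_comp_equiv {ι : Type*} [Fintype ι] (σ : ι ≃ ι) (v : EuclideanSpace ℂ ι) :
    ‖((WithLp.equiv 2 (ι → ℂ)).symm fun j => v (σ j))‖ = ‖v‖ := by
  rw [EuclideanSpace.norm_eq, EuclideanSpace.norm_eq]
  congr 1
  exact Equiv.sum_comp σ (fun i => ‖v i‖ ^ 2)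

lemma euclidean_sum_apply {ι : Type*} [Fintype ι] {κ : Type*} [Fintype κ]
    (u : κ → EuclideanSpace ℂ ι) (j : ι) :
    (∑ d : κ, u d) j = ∑ d : κ, u d j := by
  calc (∑ d : κ, u d) j
      = (WithLp.linearEquiv 2 ℂ (ι → ℂ)) (∑ d : κ, u d) j := rfl
    _ = (∑ d : κ, (WithLp.linearEquiv 2 ℂ (ι → ℂ)) (u d)) j := by rw [map_sum]
    _ = ∑ d : κ, u d j := by rw [Finset.sum_apply]; rfl

set_option maxHeartbeats 2000000 in
theorem stmt_10 (n : ℕ) (hn : 1 ≤ n) (N : ℕ) (hN : N = 2 ^ n) [NeZero N]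
    (h : ℝ) (hh : h = 1 / N) (D : ℕ) (hD : 1 ≤ D) :
    ‖LinearMap.toContinuousLinearMap (Matrix.toEuclideanLin (LD N D h))‖ = 4 * D / h ^ 2 ∧
    (4 * D / h ^ 2 : ℝ) = 4 * D * (N : ℝ) ^ 2 ∧
    ‖LinearMap.toContinuousLinearMap (Matrix.toEuclideanLin (LtD N D h))‖ = 1 := by
  classical
  have hn0 : n ≠ 0 := by omega
  have hN1 : 1 < N := by rw [hN]; exact Nat.one_lt_two_pow hn0
  have hNeven : Even N := by rw [hN]; exact (Nat.even_pow).2 ⟨even_two, hn0⟩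
  have hNRpos : (0:ℝ) < N := by exact_mod_cast Nat.lt_of_lt_of_le Nat.zero_lt_one hN1.le
  have hhpos : 0 < h := by rw [hh]; positivity
  have hDpos : (0:ℝ) < D := by exact_mod_cast hD
  set Ix := (Fin D → Fin N) with hIx
  set T := LinearMap.toContinuousLinearMap (Matrix.toEuclideanLin (LD N D h)) with hT
  set C : ℝ := 4 * D / h ^ 2 with hC
  have hCpos : 0 < C := div_pos (by linarith) (pow_pos hhpos 2)
  -- upper bound
  have upper : ∀ v : EuclideanSpace ℂ Ix, ‖T v‖ ≤ C * ‖v‖ := by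
    intro v
    set u : Fin D → EuclideanSpace ℂ Ix := fun d =>
      ((1 / h ^ 2 : ℝ) : ℂ) •
        (((WithLp.equiv 2 (Ix → ℂ)).symm fun j => v ((shiftEq d 1).symm j))
          + ((WithLp.equiv 2 (Ix → ℂ)).symm fun j => v (shiftEq d 1 j))
          - (2 : ℂ) • v) with hu
    have hTv : T v = ∑ d : Fin D, u d := by
      ext j
      rw [euclidean_sum_apply]
      have hTvj : T v j = (LD N D h).mulVec v j := rfl
      rw [hTvj, mulVec_LD]
      refine Finset.sum_congr rfl fun d _ => ?_
      simp only [hu, PiLp.smul_apply, PiLp.sub_apply, PiLp.add_apply, smul_eq_mul,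
        shiftEq_apply, shiftEq_symm_apply]
      rfl
    have hud : ∀ d : Fin D, ‖u d‖ ≤ (4 / h ^ 2) * ‖v‖ := by
      intro d
      have h1 : ‖((WithLp.equiv 2 (Ix → ℂ)).symm fun j => v ((shiftEq d 1).symm j))‖ = ‖v‖ :=
        norm_comp_equiv (shiftEq d 1).symm v
      have h2 : ‖((WithLp.equiv 2 (Ix → ℂ)).symm fun j => v (shiftEq d 1 j))‖ = ‖v‖ :=
        norm_comp_equiv (shiftEq d 1) v
      rw [hu]
      simp only
      rw [norm_smul]
      have hc : ‖((1 / h ^ 2 : ℝ) : ℂ)‖ = 1 / h ^ 2 := by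
        rw [Complex.norm_real, Real.norm_eq_abs, abs_of_pos (by positivity)]
      rw [hc]
      have h3 : ‖(2 : ℂ) • v‖ = 2 * ‖v‖ := by
        rw [norm_smul]; norm_num
      have hb : ‖((WithLp.equiv 2 (Ix → ℂ)).symm fun j => v ((shiftEq d 1).symm j))
          + ((WithLp.equiv 2 (Ix → ℂ)).symm fun j => v (shiftEq d 1 j))
          - (2 : ℂ) • v‖ ≤ 4 * ‖v‖ := by
        calc _ ≤ ‖((WithLp.equiv 2 (Ix → ℂ)).symm fun j => v ((shiftEq d 1).symm j))
              + ((WithLp.equiv 2 (Ix → ℂ)).symm fun j => v (shiftEq d 1 j))‖ + ‖(2:ℂ) • v‖ :=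
              norm_sub_le _ _
          _ ≤ ‖((WithLp.equiv 2 (Ix → ℂ)).symm fun j => v ((shiftEq d 1).symm j))‖
              + ‖((WithLp.equiv 2 (Ix → ℂ)).symm fun j => v (shiftEq d 1 j))‖ + ‖(2:ℂ) • v‖ := by
              gcongr; exact norm_add_le _ _
          _ = 4 * ‖v‖ := by rw [h1, h2, h3]; ring
      calc (1 / h ^ 2) * ‖_‖ ≤ (1 / h ^ 2) * (4 * ‖v‖) := by gcongr
        _ = (4 / h ^ 2) * ‖v‖ := by ring
    rw [hTv]
    calc ‖∑ d : Fin D, u d‖ ≤ ∑ d : Fin D, ‖u d‖ := norm_sum_le _ _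
      _ ≤ ∑ _d : Fin D, (4 / h ^ 2) * ‖v‖ := Finset.sum_le_sum fun d _ => hud d
      _ = C * ‖v‖ := by
          rw [Finset.sum_const, Finset.card_univ, Fintype.card_fin, nsmul_eq_mul, hC]
          field_simp
  -- eigenvector
  set W : Ix → ℂ := fun j => ∏ d : Fin D, sgn (j d) with hW
  set V : EuclideanSpace ℂ Ix := (WithLp.equiv 2 (Ix → ℂ)).symm W with hV
  have hWupd : ∀ (j : Ix) (d : Fin D) (m : Fin N),
      W (Function.update j d m) = sgn m * ∏ e ∈ Finset.univ.erase d, sgn (j e) := by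
    intro j d m
    have hpt : ∀ e : Fin D, sgn (Function.update j d m e)
        = Function.update (fun e' => sgn (j e')) d (sgn m) e := by
      intro e
      rcases eq_or_ne e d with rfl | he
      · simp
      · simp [Function.update_of_ne he]
    calc W (Function.update j d m)
        = ∏ e : Fin D, Function.update (fun e' => sgn (j e')) d (sgn m) e :=
          Finset.prod_congr rfl fun e _ => hpt e
      _ = sgn m * ∏ e ∈ Finset.univ \ {d}, sgn (j e) :=
          Finset.prod_update_of_mem (Finset.mem_univ d) _ _
      _ = sgn m * ∏ e ∈ Finset.univ.erase d, sgn (j e) := by rw [Finset.erase_eq]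
  have hWval : ∀ (j : Ix) (d : Fin D),
      W j = sgn (j d) * ∏ e ∈ Finset.univ.erase d, sgn (j e) :=
    fun j d => (Finset.mul_prod_erase Finset.univ _ (Finset.mem_univ d)).symm
  have hEig : T V = ((-C : ℝ) : ℂ) • V := by
    ext j
    have h₁ : T V j = (LD N D h).mulVec W j := rfl
    rw [h₁, mulVec_LD]
    have hterm : ∀ d : Fin D,
        ((1 / h ^ 2 : ℝ) : ℂ) * (W (Function.update j d (j d - 1))
          + W (Function.update j d (j d + 1)) - 2 * W j)
        = ((1 / h ^ 2 : ℝ) : ℂ) * (-4) * W j := by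
      intro d
      rw [hWupd j d (j d - 1), hWupd j d (j d + 1), sgn_sub_one hNeven hN1,
        sgn_add_one hNeven hN1, hWval j d]
      ring
    rw [Finset.sum_congr rfl fun d _ => hterm d, Finset.sum_const, Finset.card_univ,
      Fintype.card_fin, nsmul_eq_mul]
    have hVj : (((-C : ℝ) : ℂ) • V) j = ((-C : ℝ) : ℂ) * W j := rfl
    rw [hVj]
    have hcast : (D : ℂ) * (((1 / h ^ 2 : ℝ) : ℂ) * (-4)) = ((-C : ℝ) : ℂ) := by
      rw [hC]
      push_cast
      field_simp
    rw [← hcast]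
    ring
  have hVne : V ≠ 0 := by
    intro h0
    have hz : W (fun _ => (0 : Fin N)) = 0 := by
      have : V (fun _ => (0 : Fin N)) = 0 := by rw [h0]; rfl
      exact this
    rw [hW] at hz
    simp [sgn] at hz
  have hlower : C ≤ ‖T‖ := by
    have h1 : ‖T V‖ = C * ‖V‖ := by
      rw [hEig, norm_smul, Complex.norm_real, Real.norm_eq_abs, abs_neg, abs_of_pos hCpos]
    have h2 := T.le_opNorm V
    rw [h1] at h2
    exact le_of_mul_le_mul_right h2 (norm_pos_iff.2 hVne)
  have part1 : ‖T‖ = C := le_antisymm (T.opNorm_le_bound hCpos.le upper) hlower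
  refine ⟨part1, ?_, ?_⟩
  · rw [hC, hh]
    field_simp
  · have heq : LinearMap.toContinuousLinearMap (Matrix.toEuclideanLin (LtD N D h))
        = ((h ^ 2 / (4 * D) : ℝ) : ℂ) • T := by
      rw [hT]
      simp only [LtD, _root_.map_smul]
    rw [heq, norm_smul ((h ^ 2 / (4 * (D:ℝ)) : ℝ) : ℂ) T, part1, Complex.norm_real,
      Real.norm_eq_abs, abs_of_pos (by positivity : (0:ℝ) < h ^ 2 / (4 * D)), hC]
    field_simp
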